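/- Let n ≥ 1, a : Fin n → ℝ and b ∈ ℝ with 0 < a i < b for all i, and let λ, μ ∈ ℝ with λ < a i and μ < a i for all i, and μ ≠ 0. Define f_λ on ℝ^{n+1} by multiplying x_i by Real.sqrt ((a i - λ)/(a i)) for i ≥ 1 and x₀ by Real.sqrt ((b - λ)/b). If x ∈ ℝ^{n+1} satisfies q(x) = ∑_{i=1}^n (x i)^2/a i - (x 0)^2/b = 0 and q_μ(x) = ∑_{i=1}^n (x i)^2/(a i - μ) - (x 0)^2/(b - μ) = 0, then q_μ(f_λ x) = 0. (Hyperbolic analog: x and f_λ(x) lie on the same quadrics confocal to the hyperbolic ellipsoid E; this rests on the linear relation (λ/μ) q + (1 - λ/μ) q_μ = q_μ ∘ f_λ.) -/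

import Mathlib

/-!
Writing `s_t = (c - t) / c` for the squared scaling factor on a coordinate with parameter `c`,
one has `s_λ / (c - μ) = (λ / μ) / c + (1 - λ / μ) / (c - μ)` for every `c`. Summing over the
coordinates gives `q_μ ∘ f_λ = (λ / μ) q + (1 - λ / μ) q_μ`, so `f_λ` maps `q = q_μ = 0` into
`q_μ = 0`.
-/

/-- The form `q_t` of the paper; `q` is the case `t = 0`. -/
noncomputable def confocalQuadric {n : ℕ} (a : Fin n → ℝ) (b t : ℝ) (x : Fin (n + 1) → ℝ) : ℝ :=
  ∑ i : Fin n, x i.succ ^ 2 / (a i - t) - x 0 ^ 2 / (b - t)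

theorem sub_div_mul_div_sub_eq {c lam mu : ℝ} (hc : c ≠ 0) (hcmu : c - mu ≠ 0) (hmu : mu ≠ 0)
    (y : ℝ) :
    (c - lam) / c * y / (c - mu) = lam / mu * (y / c) + (1 - lam / mu) * (y / (c - mu)) := by
  field_simp
  ring

theorem confocalQuadric_eq_of_sq_eq {n : ℕ} (a : Fin n → ℝ) (b : ℝ) {lam mu : ℝ} (hmu : mu ≠ 0)
    (ha : ∀ i, a i ≠ 0) (hamu : ∀ i, a i - mu ≠ 0) (hb : b ≠ 0) (hbmu : b - mu ≠ 0)
    {x y : Fin (n + 1) → ℝ}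
    (hyi : ∀ i : Fin n, y i.succ ^ 2 = (a i - lam) / a i * x i.succ ^ 2)
    (hy0 : y 0 ^ 2 = (b - lam) / b * x 0 ^ 2) :
    confocalQuadric a b mu y =
      lam / mu * confocalQuadric a b 0 x + (1 - lam / mu) * confocalQuadric a b mu x := by
  simp only [confocalQuadric, sub_zero, hyi, hy0, sub_div_mul_div_sub_eq (ha _) (hamu _) hmu,
    sub_div_mul_div_sub_eq hb hbmu hmu, Finset.sum_add_distrib, ← Finset.mul_sum]
  ring

theorem sq_sqrt_sub_div_mul {c lam : ℝ} (hc : 0 < c) (hlam : lam ≤ c) (x : ℝ) :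
    (√((c - lam) / c) * x) ^ 2 = (c - lam) / c * x ^ 2 := by
  rw [mul_pow, Real.sq_sqrt (div_nonneg (sub_nonneg.2 hlam) hc.le)]

/-- Hyperbolic analog: the points `x ∈ E` and `f_λ(x) ∈ E_λ` lie on the same quadrics confocal
to the hyperbolic ellipsoid `E`: if `q(x) = 0` and `q_μ(x) = 0`, then `q_μ(f_λ x) = 0`. -/
theorem hyperbolic_confocal_map_same_quadrics (n : ℕ) (hn : 1 ≤ n) (a : Fin n → ℝ) (b : ℝ)
    (ha : ∀ i, 0 < a i) (hab : ∀ i, a i < b)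
    (lam mu : ℝ) (hlam : ∀ i, lam < a i) (hmu : ∀ i, mu < a i) (hmu0 : mu ≠ 0)
    (f : (Fin (n + 1) → ℝ) →ₗ[ℝ] (Fin (n + 1) → ℝ))
    (hf0 : ∀ x : Fin (n + 1) → ℝ, f x 0 = Real.sqrt ((b - lam) / b) * x 0)
    (hfi : ∀ (x : Fin (n + 1) → ℝ) (i : Fin n),
      f x i.succ = Real.sqrt ((a i - lam) / a i) * x i.succ)
    (x : Fin (n + 1) → ℝ)
    (hq : ∑ i : Fin n, (x i.succ) ^ 2 / a i - (x 0) ^ 2 / b = 0)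
    (hqmu : ∑ i : Fin n, (x i.succ) ^ 2 / (a i - mu) - (x 0) ^ 2 / (b - mu) = 0) :
    ∑ i : Fin n, (f x i.succ) ^ 2 / (a i - mu) - (f x 0) ^ 2 / (b - mu) = 0 := by
  let i₀ : Fin n := ⟨0, hn⟩
  have hb : 0 < b := (ha i₀).trans (hab i₀)
  have hlamb : lam < b := (hlam i₀).trans (hab i₀)
  have hmub : mu < b := (hmu i₀).trans (hab i₀)
  have hfx := confocalQuadric_eq_of_sq_eq a b (lam := lam) (x := x) (y := f x) hmu0
    (fun i => (ha i).ne') (fun i => (sub_pos.2 (hmu i)).ne') hb.ne' (sub_pos.2 hmub).ne'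
    (fun i => by rw [hfi, sq_sqrt_sub_div_mul (ha i) (hlam i).le])
    (by rw [hf0, sq_sqrt_sub_div_mul hb hlamb.le])
  have hq' : confocalQuadric a b 0 x = 0 := by simpa only [confocalQuadric, sub_zero] using hq
  change confocalQuadric a b mu (f x) = 0
  rw [hfx, hq', show confocalQuadric a b mu x = 0 from hqmu]
  ring
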